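/- arXiv:2008.03065 — 2 statements merged into one kernel-verified Lean document; each statement's English description precedes it below -/
import Mathlib

section
/- Let K be a finite poset, P ∈ Or(K) idempotent, and u, v ∈ K \ im(P) with u ≤ v. Then the interval [u,v] of K is contained in K \ im(P) if and only if u is not strictly below P(v). -/
theorem apply_eq_self_of_mem_range {α : Type*} {P : α → α} (hidem : P ∘ P = P) {x : α}
    (hx : x ∈ Set.range P) : P x = x := by
  obtain ⟨y, rfl⟩ := hx
  exact congrFun hidem y

theorem le_apply_of_mem_range_of_le {α : Type*} [Preorder α] {P : α → α} (hmono : Monotone P)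
    (hidem : P ∘ P = P) {x v : α} (hx : x ∈ Set.range P) (hxv : x ≤ v) : x ≤ P v :=
  apply_eq_self_of_mem_range hidem hx ▸ hmono hxv

theorem stmt_8_general {K : Type*} [PartialOrder K]
    (P : K → K) (hreg : ∀ x, P x ≤ x) (hmono : Monotone P) (hidem : P ∘ P = P)
    (u v : K) (hu : u ∉ Set.range P) :
    Set.Icc u v ⊆ (Set.range P)ᶜ ↔ ¬ u < P v := by
  constructor
  · intro hIcc hlt
    exact hIcc ⟨hlt.le, hreg v⟩ ⟨v, rfl⟩
  · rintro hnlt x ⟨hux, hxv⟩ hx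
    have hne : u ≠ P v := fun h => hu ⟨v, h.symm⟩
    exact hnlt ((hux.trans (le_apply_of_mem_range_of_le hmono hidem hx hxv)).lt_of_ne hne)

/-- Let `P ∈ Or(K)` be idempotent and `u, v ∈ K \ im(P)` with `u ≤ v`.
Then `[u,v] ⊆ K \ im(P)` iff `u` is not strictly below `P v`. -/
theorem stmt_8 {K : Type*} [PartialOrder K] [Fintype K]
    (P : K → K) (hreg : ∀ x, P x ≤ x) (hmono : Monotone P) (hidem : P ∘ P = P)
    (u v : K) (hu : u ∉ Set.range P) (hv : v ∉ Set.range P) (huv : u ≤ v) :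
    Set.Icc u v ⊆ (Set.range P)ᶜ ↔ ¬ u < P v :=
  stmt_8_general P hreg hmono hidem u v hu
end

section
/- Let K be a finite graded poset and P a special idempotent, i.e. an idempotent element of the submonoid of Or(K) generated by the maps P^M for special matchings M. Then for every v ∈ im(P), the fiber P^{-1}(v) is an interval of K (with minimum v). -/
/-- A special matching of a poset. -/
def IsSpecialMatching {K : Type*} [PartialOrder K] (M : K → K) : Prop :=
  (∀ x, M (M x) = x) ∧ (∀ x, M x ⋖ x ∨ x ⋖ M x) ∧
    (∀ x y : K, x ⋖ y → x ≠ M y → M x ≤ M y)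

open scoped Classical in
/-- The idempotent `P^M` associated with a special matching `M`. -/
noncomputable def PMmap {K : Type*} [PartialOrder K] (M : K → K) : K → K :=
  fun x => if M x ⋖ x then M x else x

/-- The monoid `M^K ⊆ Or(K)` generated (inside `Function.End K`, whose identity is
`id`) by the idempotents `P^M` for special matchings `M`. -/
def specialMonoid (K : Type*) [PartialOrder K] : Submonoid (Function.End K) :=
  Submonoid.closure {f : Function.End K | ∃ M : K → K, IsSpecialMatching M ∧ f = PMmap M}

/-!
Each `P^M` is a deflationary map with an upper adjoint: `P^M x ≤ b ↔ x ≤ b⁺`, where `b⁺ = M b`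
if `b ⋖ M b` and `b⁺ = b` otherwise. Moreover, for a fixed point `v` of `P^M` (that is,
`v ⋖ M v`), `v ≤ P^M x ↔ v ≤ x`. Both facts follow from the lifting property of special
matchings, and both survive composition, so they hold for every `P ∈ M^K`. For an idempotent `P`
each `v ∈ im P` is a fixed point, and then `P x = v ↔ v ≤ x ∧ x ≤ g v` for the upper adjoint `g`
of `P`: the fiber is the interval `[v, g v]`.
-/

namespace IsSpecialMatching

variable {K : Type*} [PartialOrder K] {M : K → K}

lemma involutive (hM : IsSpecialMatching M) : Function.Involutive M := hM.1

lemma covBy_or_covBy (hM : IsSpecialMatching M) (x : K) : M x ⋖ x ∨ x ⋖ M x := hM.2.1 x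

lemma map_le_map_of_covBy (hM : IsSpecialMatching M) {x y : K} (hxy : x ⋖ y) (hx : x ≠ M y) :
    M x ≤ M y :=
  hM.2.2 x y hxy hx

variable [Finite K]

-- Two halves of the lifting property of special matchings.
lemma map_le_of_le (hM : IsSpecialMatching M) {u w : K} (huw : u ≤ w) (hw : M w ⋖ w) :
    M u ≤ w := by
  induction u using WellFoundedGT.induction with
  | _ u ih =>
  rcases hM.covBy_or_covBy u with hu | hu
  · exact hu.le.trans huw
  have huw' : u < w := huw.lt_of_ne (by rintro rfl; exact hu.lt.not_gt hw.lt)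
  obtain ⟨z, huz, hzw⟩ := exists_covBy_le_of_lt huw'
  by_cases hzu : z = M u
  · exact hzu ▸ hzw
  have hMuz : M u ≤ M z :=
    hM.map_le_map_of_covBy huz (by rintro rfl; exact hzu (hM.involutive z).symm)
  exact hMuz.trans (ih z huz.lt hzw)

lemma le_map_of_le (hM : IsSpecialMatching M) {u w : K} (huw : u ≤ w) (hw : M w ⋖ w)
    (hu : u ⋖ M u) : u ≤ M w := by
  induction w using WellFoundedLT.induction with
  | _ w ih =>
  have huw' : u < w := huw.lt_of_ne (by rintro rfl; exact hu.lt.not_gt hw.lt)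
  obtain ⟨y, huy, hyw⟩ := exists_le_covBy_of_lt huw'
  by_cases hyw' : y = M w
  · exact hyw' ▸ huy
  have hMyw : M y ≤ M w := hM.map_le_map_of_covBy hyw hyw'
  rcases hM.covBy_or_covBy y with hy | hy
  · exact (ih y hyw.lt huy hy).trans hMyw
  · exact (hyw.2 (hy.lt.trans_le hMyw) hw.lt).elim

end IsSpecialMatching

section PMmap

variable {K : Type*} [PartialOrder K] {M : K → K} {x : K}

lemma PMmap_of_covBy (hx : M x ⋖ x) : PMmap M x = M x := if_pos hx

lemma PMmap_of_not_covBy (hx : ¬ M x ⋖ x) : PMmap M x = x := if_neg hx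

lemma PMmap_le (x : K) : PMmap M x ≤ x := by
  by_cases hx : M x ⋖ x
  · exact (PMmap_of_covBy hx).trans_le hx.le
  · exact (PMmap_of_not_covBy hx).le

lemma covBy_of_PMmap_eq_self (hM : IsSpecialMatching M) (hx : PMmap M x = x) : x ⋖ M x :=
  (hM.covBy_or_covBy x).resolve_left fun h => h.lt.ne ((PMmap_of_covBy h).symm.trans hx)

open scoped Classical in
noncomputable def upperPMmap (M : K → K) : K → K :=
  fun x => if x ⋖ M x then M x else x

variable [Finite K]

lemma monotone_PMmap (hM : IsSpecialMatching M) : Monotone (PMmap M) := by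
  let := LocallyFiniteOrder.ofFiniteIcc fun a b : K => (Set.Icc a b).toFinite
  refine (monotone_iff_forall_covBy _).2 fun x y hxy => ?_
  by_cases hy : M y ⋖ y
  · rw [PMmap_of_covBy hy]
    by_cases hxy' : x = M y
    · exact (PMmap_le x).trans hxy'.le
    have hMxy : M x ≤ M y := hM.map_le_map_of_covBy hxy hxy'
    by_cases hx : M x ⋖ x
    · rwa [PMmap_of_covBy hx]
    · rw [PMmap_of_not_covBy hx]
      exact ((hM.covBy_or_covBy x).resolve_left hx).le.trans hMxy
  · rw [PMmap_of_not_covBy hy]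
    exact (PMmap_le x).trans hxy.le

lemma le_of_PMmap_le (hM : IsSpecialMatching M) {w : K} (hxw : PMmap M x ≤ w) (hw : M w ⋖ w) :
    x ≤ w := by
  by_cases hx : M x ⋖ x
  · rw [PMmap_of_covBy hx] at hxw
    simpa only [hM.involutive x] using hM.map_le_of_le hxw hw
  · rwa [PMmap_of_not_covBy hx] at hxw

lemma gc_PMmap (hM : IsSpecialMatching M) : GaloisConnection (PMmap M) (upperPMmap M) := by
  intro x b
  unfold upperPMmap
  split_ifs with hb
  · have hMb : M (M b) ⋖ M b := by rwa [hM.involutive]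
    refine ⟨fun h => le_of_PMmap_le hM (h.trans hb.le) hMb, fun h => ?_⟩
    calc PMmap M x ≤ PMmap M (M b) := monotone_PMmap hM h
      _ = b := by rw [PMmap_of_covBy hMb, hM.involutive]
  · exact ⟨fun h => le_of_PMmap_le hM h ((hM.covBy_or_covBy b).resolve_right hb),
      fun h => (PMmap_le x).trans h⟩

lemma le_PMmap_iff (hM : IsSpecialMatching M) {v : K} (hv : v ⋖ M v) :
    v ≤ PMmap M x ↔ v ≤ x := by
  refine ⟨fun h => h.trans (PMmap_le x), fun h => ?_⟩
  by_cases hx : M x ⋖ x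
  · rw [PMmap_of_covBy hx]
    exact hM.le_map_of_le h hx hv
  · rwa [PMmap_of_not_covBy hx]

end PMmap

section DeflationaryAdjoint

variable (K : Type*) [PartialOrder K]

def deflationaryAdjointMonoid : Submonoid (Function.End K) where
  carrier := {f | (∃ g, GaloisConnection f g) ∧ (∀ x, f x ≤ x) ∧
    ∀ v, f v = v → ∀ x, v ≤ f x ↔ v ≤ x}
  one_mem' := ⟨⟨id, GaloisConnection.id⟩, le_refl, fun _ _ _ => Iff.rfl⟩
  mul_mem' := by
    rintro f g ⟨⟨f', hf⟩, hf_le, hf_fix⟩ ⟨⟨g', hg⟩, hg_le, hg_fix⟩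
    refine ⟨⟨g' ∘ f', hg.compose hf⟩, fun x => (hf_le (g x)).trans (hg_le x), fun v hv x => ?_⟩
    change f (g v) = v at hv
    have hgv : g v = v := le_antisymm (hg_le v) (hv.symm.trans_le (hf_le (g v)))
    rw [hgv] at hv
    exact (hf_fix v hv (g x)).trans (hg_fix v hgv x)

lemma specialMonoid_le_deflationaryAdjointMonoid [Finite K] :
    specialMonoid K ≤ deflationaryAdjointMonoid K :=
  Submonoid.closure_le.2 <| by
    rintro _ ⟨M, hM, rfl⟩
    exact ⟨⟨_, gc_PMmap hM⟩, PMmap_le,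
      fun v hv _ => le_PMmap_iff hM (covBy_of_PMmap_eq_self hM hv)⟩

variable {K}

lemma setOf_eq_eq_Icc {f g : K → K} (hfg : GaloisConnection f g) {v : K}
    (hv : ∀ x, v ≤ f x ↔ v ≤ x) : {x | f x = v} = Set.Icc v (g v) := by
  ext x
  rw [Set.mem_ofPred_eq, le_antisymm_iff, hfg, hv, and_comm]
  rfl

end DeflationaryAdjoint

theorem stmt_13_general {K : Type*} [PartialOrder K] [Fintype K]
    (P : Function.End K) (hP : P ∈ specialMonoid K) (hidem : P * P = P) :
    ∀ v ∈ Set.range (P : K → K), ∃ w : K, {x : K | P x = v} = Set.Icc v w := by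
  rintro _ ⟨u, rfl⟩
  obtain ⟨⟨g, hgc⟩, -, hfix⟩ := specialMonoid_le_deflationaryAdjointMonoid K hP
  exact ⟨g (P u), setOf_eq_eq_Icc hgc (hfix _ (congrFun hidem u))⟩

/-- For a special idempotent `P` of a finite graded poset `K`, every
fiber `P⁻¹(v)` with `v ∈ im(P)` is an interval of `K` (with minimum `v`). -/
theorem stmt_13 {K : Type*} [PartialOrder K] [Fintype K] [OrderBot K] [OrderTop K]
    (ρ : K → ℕ) (hρbot : ρ ⊥ = 0) (hρ : ∀ x y : K, x ⋖ y → ρ y = ρ x + 1)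
    (P : Function.End K) (hP : P ∈ specialMonoid K) (hidem : P * P = P) :
    ∀ v ∈ Set.range (P : K → K), ∃ w : K, {x : K | P x = v} = Set.Icc v w :=
  stmt_13_general P hP hidem
end
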